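/- Let T_1,…,T_m : [0,1] → [0,1] be finitely many maps and x0 ∈ [0,1]. Assume that every finite composition T_{i_j} ∘ ⋯ ∘ T_{i_1} (i_1,…,i_j ∈ {1,…,m}, j ≥ 1) is continuous at x0 and satisfies (T_{i_j} ∘ ⋯ ∘ T_{i_1})(x0) ≠ x0 (i.e., x0 is non-periodic for the random system and lies outside the set 𝒟 of discontinuities). Fix c > 0 and let V_n := { x ∈ [0,1] : |x − x0| < c/n }. Then for every integer R ≥ 1 there exists n_R ≥ 1 such that for all n ≥ n_R, every word (i_1,…,i_j) with 1 ≤ j < R, and every x ∈ V_n: (T_{i_j} ∘ ⋯ ∘ T_{i_1})(x) ∉ V_n. In particular, the shortest return time r(V_n) := inf_{ω} inf_{x ∈ V_n} inf{ k ≥ 1 : T_ω^k(x) ∈ V_n } tends to +∞ as n → ∞. -/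

import Mathlib

open MeasureTheory Filter Set Topology

noncomputable section

/-- The two-sided shift space on `m` symbols. -/
abbrev Om (m : ℕ) := ℤ → Fin m

/-- The random composition `T_ω^n = T_{ω_{n−1}} ∘ ⋯ ∘ T_{ω_0}`. -/
def randComp {m : ℕ} (T : Fin m → ℝ → ℝ) (ω : Om m) : ℕ → ℝ → ℝ
  | 0 => fun x => x
  | n + 1 => fun x => T (ω (n : ℤ)) (randComp T ω n x)

/-- The composition `T_{i_j} ∘ ⋯ ∘ T_{i_1}` along a finite word `w = [i_1, …, i_j]`. -/
def wordComp {m : ℕ} (T : Fin m → ℝ → ℝ) (w : List (Fin m)) (x : ℝ) : ℝ :=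
  w.foldl (fun y i => T i y) x

/-! A nonempty word `f` is continuous at `x0` and moves it, so Hausdorff separation of `x0` and
`f x0` gives a neighbourhood `U` of `x0` with `f '' U` disjoint from `U`, and the same holds for
every smaller set. Only finitely many words have length `< R`, and `V n` shrinks to `x0`, so
eventually `V n` is small enough for all of them at once. -/

lemma wordComp_append_singleton {m : ℕ} (T : Fin m → ℝ → ℝ) (w : List (Fin m)) (i : Fin m)
    (x : ℝ) : wordComp T (w ++ [i]) x = T i (wordComp T w x) := by
  simp [wordComp, List.foldl_append]

lemma randComp_eq_wordComp_ofFn {m : ℕ} (T : Fin m → ℝ → ℝ) (ω : Om m) (k : ℕ) (x : ℝ) :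
    randComp T ω k x = wordComp T (List.ofFn fun i : Fin k => ω i) x := by
  induction k with
  | zero => rfl
  | succ k ih =>
    rw [List.ofFn_succ', List.concat_eq_append, wordComp_append_singleton]
    simp only [Fin.val_castSucc, Fin.val_last, ← ih]
    rfl

theorem eventually_mapsTo_compl_smallSets {X : Type*} [TopologicalSpace X] [T2Space X]
    {f : X → X} {x : X} (hf : ContinuousAt f x) (hfx : f x ≠ x) :
    ∀ᶠ U in (𝓝 x).smallSets, MapsTo f U Uᶜ := by
  obtain ⟨A, B, hA, hB, hxA, hfxB, hAB⟩ := t2_separation hfx.symm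
  have hU : A ∩ f ⁻¹' B ∈ 𝓝 x := inter_mem (hA.mem_nhds hxA) (hf (hB.mem_nhds hfxB))
  filter_upwards [eventually_smallSets_subset.2 hU] with U hUsub y hy
  exact fun hfy => hAB.ne_of_mem (hUsub hfy).1 (hUsub hy).2 rfl

lemma tendsto_ball_div_nat_smallSets (x₀ c : ℝ) :
    Tendsto (fun n : ℕ => {x | |x - x₀| < c / n}) atTop (𝓝 x₀).smallSets :=
  tendsto_smallSets_iff.2 fun _ hU =>
    (tendsto_const_div_atTop_nhds_zero_nat c).eventually (eventually_ball_subset hU)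

theorem eventually_no_short_return {m : ℕ} {T : Fin m → ℝ → ℝ} {x₀ : ℝ} (R : ℕ)
    (hcont : ∀ w : List (Fin m), w ≠ [] → ContinuousAt (wordComp T w) x₀)
    (hnp : ∀ w : List (Fin m), w ≠ [] → wordComp T w x₀ ≠ x₀)
    {V : ℕ → Set ℝ} (hV : Tendsto V atTop (𝓝 x₀).smallSets) :
    ∀ᶠ n in atTop, ∀ w : List (Fin m), w ≠ [] → w.length < R →
      MapsTo (wordComp T w) (V n) (V n)ᶜ := by
  have hfin : {w : List (Fin m) | w ≠ [] ∧ w.length < R}.Finite :=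
    (List.finite_length_lt _ R).subset fun _ hw => hw.2
  filter_upwards [(eventually_all_finite hfin).2 fun w hw =>
    hV.eventually (eventually_mapsTo_compl_smallSets (hcont w hw.1) (hnp w hw.1))]
    with n hn w hw hlen using hn w ⟨hw, hlen⟩

theorem stmt7_general (m : ℕ) (T : Fin m → ℝ → ℝ)
    (x0 : ℝ)
    -- every finite composition is continuous at `x0` and does not fix `x0`
    (hcont : ∀ w : List (Fin m), w ≠ [] → ContinuousAt (wordComp T w) x0)
    (hnp : ∀ w : List (Fin m), w ≠ [] → wordComp T w x0 ≠ x0)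
    (c : ℝ)
    (V : ℕ → Set ℝ) (hV : ∀ n, V n = {x ∈ Set.Icc (0 : ℝ) 1 | |x - x0| < c / n}) :
    (∀ R : ℕ, 1 ≤ R → ∃ nR : ℕ, 1 ≤ nR ∧ ∀ n, nR ≤ n → ∀ w : List (Fin m),
      1 ≤ w.length → w.length < R → ∀ x ∈ V n, wordComp T w x ∉ V n) ∧
    -- in particular, the shortest return time `r(V_n)` tends to `+∞`
    (∀ R : ℕ, ∃ n₀ : ℕ, ∀ n, n₀ ≤ n → ∀ (ω : Om m), ∀ x ∈ V n,
      ∀ k : ℕ, 1 ≤ k → k ≤ R → randComp T ω k x ∉ V n) := by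
  have hVlim : Tendsto V atTop (𝓝 x0).smallSets :=
    (tendsto_ball_div_nat_smallSets x0 c).smallSets_mono <|
      .of_forall fun n x hx => (hV n ▸ hx).2
  have hwords (R : ℕ) := eventually_atTop.1 (eventually_no_short_return R hcont hnp hVlim)
  refine ⟨fun R _ => ?_, fun R => ?_⟩
  · obtain ⟨N, hN⟩ := hwords R
    exact ⟨N + 1, N.succ_pos, fun n hn w hw hlen =>
      hN n (by omega) w (List.ne_nil_of_length_pos hw) hlen⟩
  · obtain ⟨N, hN⟩ := hwords (R + 1)
    refine ⟨N, fun n hn ω x hx k hk hkR => ?_⟩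
    rw [randComp_eq_wordComp_ofFn]
    exact hN n hn _ (List.ofFn_eq_nil_iff.not.2 (by omega))
      (by rw [List.length_ofFn]; omega) hx

theorem stmt7 (m : ℕ) (hm : 1 ≤ m) (T : Fin m → ℝ → ℝ)
    (hmaps : ∀ i, Set.MapsTo (T i) (Set.Icc 0 1) (Set.Icc 0 1))
    (x0 : ℝ) (hx0 : x0 ∈ Set.Icc (0 : ℝ) 1)
    -- every finite composition is continuous at `x0` and does not fix `x0`
    (hcont : ∀ w : List (Fin m), w ≠ [] → ContinuousAt (wordComp T w) x0)
    (hnp : ∀ w : List (Fin m), w ≠ [] → wordComp T w x0 ≠ x0)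
    (c : ℝ) (hc : 0 < c)
    (V : ℕ → Set ℝ) (hV : ∀ n, V n = {x ∈ Set.Icc (0 : ℝ) 1 | |x - x0| < c / n}) :
    (∀ R : ℕ, 1 ≤ R → ∃ nR : ℕ, 1 ≤ nR ∧ ∀ n, nR ≤ n → ∀ w : List (Fin m),
      1 ≤ w.length → w.length < R → ∀ x ∈ V n, wordComp T w x ∉ V n) ∧
    -- in particular, the shortest return time `r(V_n)` tends to `+∞`
    (∀ R : ℕ, ∃ n₀ : ℕ, ∀ n, n₀ ≤ n → ∀ (ω : Om m), ∀ x ∈ V n,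
      ∀ k : ℕ, 1 ≤ k → k ≤ R → randComp T ω k x ∉ V n) :=
  stmt7_general m T x0 hcont hnp c V hV
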